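/- In the setting above, assume additionally that G(t) := ∫_Ω |u*(t,x)|² dx is continuous and G(t₀) > 0. Then there exist constants c₀ > 0 and h₀ > 0 such that for all 0 < h ≤ h₀, (1/(T|Ω|)) ∫₀^T ∫_Ω |α_h'(t) u*(t,x)|² dx dt ≥ (c₀/(T|Ω|)) (∫₀¹|η'(s)|² ds) h^{-1}. Hence the expected empirical residual of the spurious solution is of order exactly h^{-1}. -/

import Mathlib

open MeasureTheory

theorem stmt14 {d : ℕ} (T : ℝ) (hT : 0 < T)
    (Ωs : Set (EuclideanSpace ℝ (Fin d))) (hΩm : MeasurableSet Ωs)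
    (hΩb : Bornology.IsBounded Ωs)
    (ustar : ℝ → EuclideanSpace ℝ (Fin d) → ℝ)
    (hu : Continuous fun p : ℝ × EuclideanSpace ℝ (Fin d) => ustar p.1 p.2)
    (η : ℝ → ℝ) (hη : ContDiff ℝ (⊤ : ℕ∞) η)
    (hη1 : ∀ s : ℝ, s ≤ 0 → η s = 1) (hη0 : ∀ s : ℝ, 1 ≤ s → η s = 0)
    (t₀ : ℝ) (ht₀ : 0 < t₀) (ht₀T : t₀ < T)
    (hG : Continuous fun t : ℝ => ∫ x in Ωs, (ustar t x) ^ 2)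
    (hGpos : 0 < ∫ x in Ωs, (ustar t₀ x) ^ 2) :
    ∃ c₀ > (0:ℝ), ∃ h₀ > (0:ℝ), ∀ h : ℝ, 0 < h → h ≤ h₀ →
      (c₀ / (T * (volume Ωs).toReal)) * (∫ s in (0:ℝ)..1, (deriv η s) ^ 2) * h⁻¹
        ≤ (1 / (T * (volume Ωs).toReal)) *
            ∫ t in (0:ℝ)..T, ∫ x in Ωs,
              (deriv (fun t => η ((t - t₀) / h)) t * ustar t x) ^ 2 := by
  classical
  set G : ℝ → ℝ := fun t => ∫ x in Ωs, (ustar t x) ^ 2 with hGdef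
  -- continuity of deriv η
  have hη' : Continuous (deriv η) := (contDiff_infty_iff_deriv.mp (hη.of_le (by simp))).2.continuous
  have hηdiff : Differentiable ℝ η := hη.differentiable (by simp)
  -- choose δ
  have hev : ∀ᶠ t in nhds t₀, G t₀ / 2 < G t :=
    (hG.tendsto t₀).eventually (eventually_gt_nhds (half_lt_self hGpos))
  obtain ⟨δ, hδpos, hδ⟩ := Metric.eventually_nhds_iff.mp hev
  refine ⟨G t₀ / 2, half_pos hGpos, min (δ / 2) (T - t₀),
    lt_min (half_pos hδpos) (sub_pos.mpr ht₀T), ?_⟩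
  intro h hh hh0
  have hne : h ≠ 0 := ne_of_gt hh
  -- positivity of T * vol
  have hV0 : volume Ωs ≠ 0 := by
    intro h0
    rw [Measure.restrict_eq_zero.mpr h0, integral_zero_measure] at hGpos
    exact lt_irrefl 0 hGpos
  have hVtop : volume Ωs ≠ ⊤ := hΩb.measure_lt_top.ne
  have hVpos : 0 < (volume Ωs).toReal := ENNReal.toReal_pos hV0 hVtop
  have hTV : 0 < T * (volume Ωs).toReal := mul_pos hT hVpos
  -- derivative formula
  have hderiv : ∀ t : ℝ, deriv (fun t => η ((t - t₀) / h)) t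
      = deriv η ((t - t₀) / h) * h⁻¹ := by
    intro t
    have h1 : HasDerivAt (fun t : ℝ => (t - t₀) / h) (1 / h) t := by
      simpa using ((hasDerivAt_id t).sub_const t₀).div_const h
    have h2 : HasDerivAt η (deriv η ((t - t₀) / h)) ((t - t₀) / h) :=
      (hηdiff ((t - t₀) / h)).hasDerivAt
    have := h2.comp t h1
    simpa [one_div, Function.comp_def] using this.deriv
  set c : ℝ → ℝ := fun t => deriv η ((t - t₀) / h) * h⁻¹ with hcdef
  have hccont : Continuous c :=
    ((hη'.comp ((continuous_id.sub continuous_const).div_const h)).mul continuous_const)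
  -- rewrite inner integral
  have hinner : ∀ t : ℝ,
      (∫ x in Ωs, (deriv (fun t => η ((t - t₀) / h)) t * ustar t x) ^ 2)
        = (c t) ^ 2 * G t := by
    intro t
    rw [show (fun x => (deriv (fun t => η ((t - t₀) / h)) t * ustar t x) ^ 2)
        = fun x => (c t) ^ 2 * (ustar t x) ^ 2 by
      funext x; rw [hderiv t]; ring]
    exact integral_const_mul _ _
  have hF : Continuous fun t => (c t) ^ 2 * G t := ((hccont.pow 2).mul hG)
  have hint : ∀ a b : ℝ, IntervalIntegrable (fun t => (c t) ^ 2 * G t) volume a b :=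
    fun a b => hF.intervalIntegrable a b
  -- bounds on times
  have hht : t₀ + h ≤ T := by
    have := le_trans hh0 (min_le_right _ _); linarith
  have hhδ : h < δ := lt_of_le_of_lt (le_trans hh0 (min_le_left _ _)) (half_lt_self hδpos)
  -- key: ∫₀^T ≥ ∫_{t₀}^{t₀+h}
  have hsplit1 : ∫ t in (0:ℝ)..T, (c t) ^ 2 * G t
      = (∫ t in (0:ℝ)..t₀, (c t) ^ 2 * G t) + (∫ t in t₀..(t₀+h), (c t) ^ 2 * G t)
        + ∫ t in (t₀+h)..T, (c t) ^ 2 * G t := by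
    rw [intervalIntegral.integral_add_adjacent_intervals (hint 0 t₀) (hint t₀ (t₀+h)),
      intervalIntegral.integral_add_adjacent_intervals (hint 0 (t₀+h)) (hint (t₀+h) T)]
  have hGnn : ∀ t : ℝ, 0 ≤ G t := by
    intro t
    exact integral_nonneg fun x => sq_nonneg _
  have hpiece_nn : ∀ a b : ℝ, a ≤ b → 0 ≤ ∫ t in a..b, (c t) ^ 2 * G t := by
    intro a b hab
    exact intervalIntegral.integral_nonneg hab fun t _ => mul_nonneg (sq_nonneg _) (hGnn t)
  have hmain1 : (∫ t in t₀..(t₀+h), (c t) ^ 2 * G t) ≤ ∫ t in (0:ℝ)..T, (c t) ^ 2 * G t := by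
    rw [hsplit1]
    have h1 := hpiece_nn 0 t₀ ht₀.le
    have h2 := hpiece_nn (t₀+h) T hht
    linarith
  -- lower bound by constant G t₀ / 2 on the small interval
  have hmono : (∫ t in t₀..(t₀+h), (c t) ^ 2 * (G t₀ / 2)) ≤
      ∫ t in t₀..(t₀+h), (c t) ^ 2 * G t := by
    apply intervalIntegral.integral_mono_on (by linarith)
      (((hccont.pow 2).mul continuous_const).intervalIntegrable _ _) (hint _ _)
    intro t ht
    rcases ht with ⟨ht1, ht2⟩
    have hd : dist t t₀ < δ := by
      rw [Real.dist_eq, abs_lt]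
      constructor <;> linarith
    exact mul_le_mul_of_nonneg_left (le_of_lt (hδ hd)) (sq_nonneg _)
  -- compute ∫ (c t)^2 via substitution
  have hsub : (∫ t in t₀..(t₀+h), (c t) ^ 2)
      = h⁻¹ * ∫ s in (0:ℝ)..1, (deriv η s) ^ 2 := by
    have e1 : (fun t => (c t) ^ 2)
        = fun t => (fun s => (deriv η (s / h)) ^ 2 * (h⁻¹) ^ 2) (t - t₀) := by
      funext t; simp [hcdef, mul_pow]
    rw [e1, intervalIntegral.integral_comp_sub_right
      (fun s => (deriv η (s / h)) ^ 2 * (h⁻¹) ^ 2) t₀]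
    have e2 : t₀ + h - t₀ = h := by ring
    have e3 : t₀ - t₀ = (0:ℝ) := by ring
    rw [e2, e3]
    rw [intervalIntegral.integral_comp_div (c := h)
      (f := fun s => (deriv η s) ^ 2 * (h⁻¹) ^ 2) hne]
    rw [intervalIntegral.integral_mul_const]
    simp only [zero_div, div_self hne, smul_eq_mul]
    field_simp
  have hconst : (∫ t in t₀..(t₀+h), (c t) ^ 2 * (G t₀ / 2))
      = (G t₀ / 2) * (h⁻¹ * ∫ s in (0:ℝ)..1, (deriv η s) ^ 2) := by
    rw [intervalIntegral.integral_mul_const, hsub]; ring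
  -- assemble
  have hkey : (G t₀ / 2) * (∫ s in (0:ℝ)..1, (deriv η s) ^ 2) * h⁻¹
      ≤ ∫ t in (0:ℝ)..T, (c t) ^ 2 * G t := by
    calc (G t₀ / 2) * (∫ s in (0:ℝ)..1, (deriv η s) ^ 2) * h⁻¹
        = (G t₀ / 2) * (h⁻¹ * ∫ s in (0:ℝ)..1, (deriv η s) ^ 2) := by ring
      _ = ∫ t in t₀..(t₀+h), (c t) ^ 2 * (G t₀ / 2) := hconst.symm
      _ ≤ ∫ t in t₀..(t₀+h), (c t) ^ 2 * G t := hmono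
      _ ≤ _ := hmain1
  have hrw : (∫ t in (0:ℝ)..T, ∫ x in Ωs,
      (deriv (fun t => η ((t - t₀) / h)) t * ustar t x) ^ 2)
      = ∫ t in (0:ℝ)..T, (c t) ^ 2 * G t := by
    apply intervalIntegral.integral_congr
    intro t _
    exact hinner t
  rw [hrw]
  rw [div_mul_eq_mul_div, div_mul_eq_mul_div, one_div, div_le_iff₀ hTV]
  calc G t₀ / 2 * (∫ s in (0:ℝ)..1, deriv η s ^ 2) * h⁻¹
      ≤ ∫ t in (0:ℝ)..T, (c t) ^ 2 * G t := hkey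
    _ = (T * (volume Ωs).toReal)⁻¹ * (∫ t in (0:ℝ)..T, (c t) ^ 2 * G t)
        * (T * (volume Ωs).toReal) := by
        field_simp
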